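/- There exists a constant C > 0, independent of x, such that for every x ∈ (0,1] one has I₃(x) ≤ C x^{−3}, where I₃(x) = ∫_{ℝ³} dp ∫_{|r|<1<|r+p|} dr ∫_{|r'|<x<|r'−p|} dr' (|r+p|² − |r|² + |r'−p|² − |r'|²)^{−3}. -/

import Mathlib

open MeasureTheory
open scoped ENNReal

noncomputable abbrev E3 := EuclideanSpace ℝ (Fin 3)

/-- The Belyakov-type integral `I_s(x)` of Lemma B.1:
`I_s(x) = ∫ dp ∫_{|r|<1<|r+p|} dr ∫_{|r'|<x<|r'-p|} dr' (|r+p|² - |r|² + |r'-p|² - |r'|²)^{-s}`. -/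
noncomputable def belyakovI (s : ℕ) (x : ℝ) : ℝ≥0∞ :=
  ∫⁻ p : E3, ∫⁻ r in {r : E3 | ‖r‖ < 1 ∧ 1 < ‖r + p‖},
    ∫⁻ r' in {r' : E3 | ‖r'‖ < x ∧ x < ‖r' - p‖},
      ENNReal.ofReal (1 / (‖r + p‖ ^ 2 - ‖r‖ ^ 2 + ‖r' - p‖ ^ 2 - ‖r'‖ ^ 2) ^ s)

/-!
By AM–GM, `(a + b)⁻³ ≤ 8⁻¹ a^(-3/2) b^(-3/2)`, which decouples the `r`- and `r'`-integrals:
`I₃(x) ≤ 8⁻¹ ∫ Φ₁(-p) Φₓ(p) dp` with `Φₓ(p) = ∫_{|r|<x<|r-p|} (|r-p|² - |r|²)^(-3/2) dr`.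
Inside the lune `|r| < x < |r - p|`, the set where `|r-p|² - |r|² ≤ u` lies in a spherical
shell of thickness `u` cut by a slab of width `u / 2|p|`; by Archimedes' hat-box argument its
volume is at most `π u² / 2|p|`. A dyadic decomposition in `u` then gives `Φₓ(p) ≲ 1 + |p|⁻¹`
for `x ≤ 1`, while for `|p| ≥ 4` the integrand is `≲ |p|⁻³` on a set of bounded volume.
So the `p`-integrand is `≲ |p|⁻²` near the origin and `≲ |p|⁻⁶` at infinity, both integrable
in `ℝ³`, and `I₃(x)` is bounded uniformly in `x ∈ (0, 1]`, a fortiori by `C x⁻³`.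
-/

open Metric Module Real
open scoped RealInnerProductSpace

theorem sq_rpow_neg_three_halves {y : ℝ} (hy : 0 ≤ y) : (y ^ 2) ^ (-(3 / 2) : ℝ) = (y ^ 3)⁻¹ := by
  rw [← Real.rpow_natCast_mul hy, show ((2 : ℕ) : ℝ) * -(3 / 2) = -(3 : ℕ) by norm_num,
    Real.rpow_neg hy, Real.rpow_natCast]

theorem one_div_add_pow_three_le {a b : ℝ} (ha : 0 < a) (hb : 0 < b) :
    1 / (a + b) ^ 3 ≤ 8⁻¹ * (a ^ (-(3 / 2) : ℝ) * b ^ (-(3 / 2) : ℝ)) := by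
  have hab : a * b ≤ ((a + b) / 2) ^ 2 := by nlinarith [sq_nonneg (a - b)]
  calc 1 / (a + b) ^ 3 = 8⁻¹ * (((a + b) / 2) ^ 2) ^ (-(3 / 2) : ℝ) := by
        rw [sq_rpow_neg_three_halves (by positivity)]; field_simp; norm_num
    _ ≤ 8⁻¹ * (a * b) ^ (-(3 / 2) : ℝ) :=
        mul_le_mul_of_nonneg_left (Real.rpow_le_rpow_of_nonpos (by positivity) hab (by norm_num))
          (by norm_num)
    _ = 8⁻¹ * (a ^ (-(3 / 2) : ℝ) * b ^ (-(3 / 2) : ℝ)) := by rw [Real.mul_rpow ha.le hb.le]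

theorem inv_four_pow_rpow_neg_three_halves (k : ℕ) :
    ((4 : ℝ)⁻¹ ^ (k + 1)) ^ (-(3 / 2) : ℝ) = 8 ^ (k + 1) := by
  rw [show (4 : ℝ)⁻¹ ^ (k + 1) = ((2 : ℝ)⁻¹ ^ (k + 1)) ^ 2 by
      rw [← pow_mul, mul_comm, pow_mul]; norm_num,
    sq_rpow_neg_three_halves (by positivity), ← pow_mul, mul_comm, pow_mul, ← inv_pow]
  norm_num

theorem subset_inter_one_lt_union_dyadic_shells {α : Type*} {S : Set α} {g : α → ℝ}
    (hg : ∀ a ∈ S, 0 < g a) :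
    S ⊆ (S ∩ {a | 1 < g a}) ∪
      ⋃ k : ℕ, S ∩ {a | (4 : ℝ)⁻¹ ^ (k + 1) < g a ∧ g a ≤ (4 : ℝ)⁻¹ ^ k} := by
  intro a ha
  rcases lt_or_ge 1 (g a) with h | h
  · exact Or.inl ⟨ha, h⟩
  · obtain ⟨k, hk⟩ :=
      exists_nat_pow_near_of_lt_one (hg a ha) h (by norm_num) (by norm_num : (4 : ℝ)⁻¹ < 1)
    exact Or.inr (Set.mem_iUnion.2 ⟨k, ha, hk⟩)

theorem setLIntegral_rpow_neg_three_halves_le {α : Type*} [MeasurableSpace α] (μ : Measure α)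
    {S : Set α} {g : α → ℝ} {K : ℝ≥0∞} (hg : ∀ a ∈ S, 0 < g a)
    (hK : ∀ u, 0 < u → μ (S ∩ {a | g a ≤ u}) ≤ K * ENNReal.ofReal (u ^ 2)) :
    ∫⁻ a in S, ENNReal.ofReal (g a ^ (-(3 / 2) : ℝ)) ∂μ ≤ μ S + 16 * K := by
  set f := fun a => ENNReal.ofReal (g a ^ (-(3 / 2) : ℝ))
  set shell : ℕ → Set α := fun k => S ∩ {a | (4 : ℝ)⁻¹ ^ (k + 1) < g a ∧ g a ≤ (4 : ℝ)⁻¹ ^ k}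
  have hcover := subset_inter_one_lt_union_dyadic_shells hg
  have hlarge : ∫⁻ a in S ∩ {a | 1 < g a}, f a ∂μ ≤ μ S := by
    calc ∫⁻ a in S ∩ {a | 1 < g a}, f a ∂μ ≤ ∫⁻ _ in S ∩ {a | 1 < g a}, 1 ∂μ :=
          setLIntegral_mono measurable_const fun a ha =>
            ENNReal.ofReal_le_one.2 (Real.rpow_le_one_of_one_le_of_nonpos ha.2.le (by norm_num))
      _ ≤ μ S := by
          rw [setLIntegral_one]
          exact measure_mono Set.inter_subset_left
  have hshell : ∀ k, ∫⁻ a in shell k, f a ∂μ ≤ K * (8 * 2⁻¹ ^ k) := by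
    intro k
    calc ∫⁻ a in shell k, f a ∂μ ≤ ∫⁻ _ in shell k, ENNReal.ofReal (8 ^ (k + 1)) ∂μ :=
          setLIntegral_mono measurable_const fun a ha => ENNReal.ofReal_le_ofReal <| by
            rw [← inv_four_pow_rpow_neg_three_halves]
            exact Real.rpow_le_rpow_of_nonpos (by positivity) ha.2.1.le (by norm_num)
      _ = ENNReal.ofReal (8 ^ (k + 1)) * μ (shell k) := setLIntegral_const _ _
      _ ≤ ENNReal.ofReal (8 ^ (k + 1)) * (K * ENNReal.ofReal (((4 : ℝ)⁻¹ ^ k) ^ 2)) := by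
          gcongr
          exact (measure_mono (Set.inter_subset_inter_right S fun a ha => ha.2)).trans
            (hK _ (by positivity))
      _ = K * (8 * 2⁻¹ ^ k) := by
          rw [mul_left_comm, ← ENNReal.ofReal_mul (by positivity)]
          rw [show (8 : ℝ) ^ (k + 1) * ((4 : ℝ)⁻¹ ^ k) ^ 2 = 8 * 2⁻¹ ^ k by
            rw [pow_succ, ← pow_mul, mul_comm k 2, pow_mul, mul_right_comm, ← mul_pow, mul_comm]
            norm_num]
          rw [ENNReal.ofReal_mul (by norm_num), ENNReal.ofReal_pow (by norm_num),
            ENNReal.ofReal_inv_of_pos (by norm_num)]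
          norm_num
  calc ∫⁻ a in S, f a ∂μ ≤ ∫⁻ a in (S ∩ {a | 1 < g a}) ∪ ⋃ k, shell k, f a ∂μ :=
        lintegral_mono_set hcover
    _ ≤ ∫⁻ a in S ∩ {a | 1 < g a}, f a ∂μ + ∫⁻ a in ⋃ k, shell k, f a ∂μ :=
        lintegral_union_le _ _ _
    _ ≤ μ S + ∑' k, K * (8 * 2⁻¹ ^ k) :=
        add_le_add hlarge ((lintegral_iUnion_le _ _).trans (ENNReal.tsum_le_tsum hshell))
    _ = μ S + 16 * K := by
        rw [ENNReal.tsum_mul_left, ENNReal.tsum_mul_left, ENNReal.tsum_geometric,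
          ENNReal.one_sub_inv_two, inv_inv, mul_comm]
        norm_num

theorem lintegral_lintegral_one_div_add_pow_three_le {α β : Type*} [MeasurableSpace α]
    [MeasurableSpace β] {μ : Measure α} {ν : Measure β} {f : α → ℝ} {g : β → ℝ}
    (hf : Measurable f) (hf₀ : ∀ᵐ a ∂μ, 0 < f a) (hg₀ : ∀ᵐ b ∂ν, 0 < g b) :
    ∫⁻ a, ∫⁻ b, ENNReal.ofReal (1 / (f a + g b) ^ 3) ∂ν ∂μ ≤
      ENNReal.ofReal 8⁻¹ * ((∫⁻ a, ENNReal.ofReal (f a ^ (-(3 / 2) : ℝ)) ∂μ) *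
        ∫⁻ b, ENNReal.ofReal (g b ^ (-(3 / 2) : ℝ)) ∂ν) := by
  set G := ∫⁻ b, ENNReal.ofReal (g b ^ (-(3 / 2) : ℝ)) ∂ν
  have hinner : ∀ a, 0 < f a →
      ∫⁻ b, ENNReal.ofReal (1 / (f a + g b) ^ 3) ∂ν ≤
        ENNReal.ofReal (8⁻¹ * f a ^ (-(3 / 2) : ℝ)) * G := by
    intro a ha
    rw [← lintegral_const_mul' _ _ ENNReal.ofReal_ne_top]
    refine lintegral_mono_ae (hg₀.mono fun b hb => ?_)
    rw [← ENNReal.ofReal_mul (by positivity), mul_assoc]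
    exact ENNReal.ofReal_le_ofReal (one_div_add_pow_three_le ha hb)
  calc ∫⁻ a, ∫⁻ b, ENNReal.ofReal (1 / (f a + g b) ^ 3) ∂ν ∂μ
      ≤ ∫⁻ a, ENNReal.ofReal (8⁻¹ * f a ^ (-(3 / 2) : ℝ)) * G ∂μ :=
        lintegral_mono_ae (hf₀.mono hinner)
    _ = ENNReal.ofReal 8⁻¹ * ((∫⁻ a, ENNReal.ofReal (f a ^ (-(3 / 2) : ℝ)) ∂μ) * G) := by
        rw [lintegral_mul_const _ (by fun_prop), ← mul_assoc,
          ← lintegral_const_mul' _ _ ENNReal.ofReal_ne_top]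
        simp_rw [← ENNReal.ofReal_mul (by norm_num : (0 : ℝ) ≤ 8⁻¹)]

section HaarIntegrals

variable {E : Type*} [NormedAddCommGroup E] [NormedSpace ℝ E] [FiniteDimensional ℝ E]
  [MeasurableSpace E] [BorelSpace E] {μ : Measure E} [μ.IsAddHaarMeasure]

theorem setLIntegral_ball_inv_norm_sq_lt_top (hE : 2 < finrank ℝ E) (R : ℝ) :
    ∫⁻ x in ball 0 R, ENNReal.ofReal ((‖x‖ ^ 2)⁻¹) ∂μ < ∞ := by
  refine Integrable.lintegral_lt_top
    (integrableOn_ball_of_norm_le_rpow (C := 1) (α := 2) (by omega) (by exact_mod_cast hE)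
      (Filter.Eventually.of_forall fun x => ?_) (Measurable.aestronglyMeasurable (by fun_prop)))
  rw [one_mul, Real.rpow_neg (norm_nonneg x), Real.rpow_two, Real.norm_of_nonneg (by positivity)]

theorem lintegral_inv_one_add_norm_pow_lt_top {n : ℕ} (hn : finrank ℝ E < n) :
    ∫⁻ x, ENNReal.ofReal (((1 + ‖x‖) ^ n)⁻¹) ∂μ < ∞ := by
  have h := finite_integral_one_add_norm (μ := μ) (r := n) (by exact_mod_cast hn)
  simp_rw [Real.rpow_neg (add_nonneg zero_le_one (norm_nonneg _)), Real.rpow_natCast] at h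
  exact h

end HaarIntegrals

theorem volume_norm_sq_lt (s : ℝ) :
    volume {y : EuclideanSpace ℝ (Fin 2) | ‖y‖ ^ 2 < s} = ENNReal.ofReal s * ENNReal.ofReal π := by
  have : {y : EuclideanSpace ℝ (Fin 2) | ‖y‖ ^ 2 < s} = ball 0 √s := by
    ext y
    simp [Real.lt_sqrt (norm_nonneg y)]
  rw [this, EuclideanSpace.volume_ball_fin_two, ← ENNReal.ofReal_pow (Real.sqrt_nonneg _)]
  rcases le_total s 0 with hs | hs
  · simp [Real.sqrt_eq_zero'.2 hs, ENNReal.ofReal_eq_zero.2 hs]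
  · rw [Real.sq_sqrt hs]

theorem volume_annulus_le (a : ℝ) {t : ℝ} (ht : 0 ≤ t) :
    volume {y : EuclideanSpace ℝ (Fin 2) | a < ‖y‖ ^ 2 ∧ ‖y‖ ^ 2 < a + t} ≤
      ENNReal.ofReal t * ENNReal.ofReal π := by
  have hdisk : {y : EuclideanSpace ℝ (Fin 2) | ‖y‖ ^ 2 < a} ⊆ {y | ‖y‖ ^ 2 < a + t} :=
    fun y (hy : ‖y‖ ^ 2 < a) => show ‖y‖ ^ 2 < a + t by linarith
  calc volume {y : EuclideanSpace ℝ (Fin 2) | a < ‖y‖ ^ 2 ∧ ‖y‖ ^ 2 < a + t}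
      ≤ volume ({y : EuclideanSpace ℝ (Fin 2) | ‖y‖ ^ 2 < a + t} \ {y | ‖y‖ ^ 2 < a}) :=
        measure_mono fun y hy => ⟨hy.2, not_lt.2 hy.1.le⟩
    _ = (ENNReal.ofReal (a + t) - ENNReal.ofReal a) * ENNReal.ofReal π := by
        rw [measure_sdiff hdisk (measurableSet_lt (by fun_prop) measurable_const).nullMeasurableSet
          (by simp [volume_norm_sq_lt, ENNReal.mul_eq_top]),
          volume_norm_sq_lt, volume_norm_sq_lt, ENNReal.sub_mul fun _ _ => ENNReal.ofReal_ne_top]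
    _ ≤ ENNReal.ofReal t * ENNReal.ofReal π := by
        gcongr
        rw [tsub_le_iff_right, add_comm]
        exact ENNReal.ofReal_add_le

noncomputable def euclideanSplitFirst (n : ℕ) :
    EuclideanSpace ℝ (Fin (n + 1)) ≃ᵐ ℝ × EuclideanSpace ℝ (Fin n) :=
  (MeasurableEquiv.toLp 2 (Fin (n + 1) → ℝ)).symm.trans <|
    (MeasurableEquiv.piFinSuccAbove (fun _ => ℝ) 0).trans <|
      MeasurableEquiv.prodCongr (MeasurableEquiv.refl ℝ) (MeasurableEquiv.toLp 2 (Fin n → ℝ))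

theorem measurePreserving_euclideanSplitFirst (n : ℕ) :
    MeasurePreserving (euclideanSplitFirst n) := by
  unfold euclideanSplitFirst
  simp only [MeasurableEquiv.coe_trans]
  exact ((MeasurePreserving.id volume).prod (PiLp.volume_preserving_toLp (Fin n))).comp
    ((volume_preserving_piFinSuccAbove (fun _ => ℝ) 0).comp
      (EuclideanSpace.volume_preserving_symm_measurableEquiv_toLp (Fin (n + 1))))

theorem euclideanSplitFirst_fst {n : ℕ} (v : EuclideanSpace ℝ (Fin (n + 1))) :
    (euclideanSplitFirst n v).1 = v 0 := rfl

theorem norm_sq_eq_euclideanSplitFirst {n : ℕ} (v : EuclideanSpace ℝ (Fin (n + 1))) :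
    ‖v‖ ^ 2 = (euclideanSplitFirst n v).1 ^ 2 + ‖(euclideanSplitFirst n v).2‖ ^ 2 := by
  have : (euclideanSplitFirst n v).2 = WithLp.toLp 2 (Fin.tail v.ofLp) := rfl
  simp [this, EuclideanSpace.norm_sq_eq, Fin.sum_univ_succ, euclideanSplitFirst_fst, Fin.tail]

theorem volume_shell_inter_slab_le_of_fst {R t c w : ℝ} (ht : 0 ≤ t) :
    volume {v : E3 | R - t < ‖v‖ ^ 2 ∧ ‖v‖ ^ 2 < R ∧ c ≤ v 0 ∧ v 0 ≤ c + w} ≤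
      ENNReal.ofReal t * ENNReal.ofReal π * ENNReal.ofReal w := by
  set T : Set (ℝ × EuclideanSpace ℝ (Fin 2)) :=
    {q | R - t < q.1 ^ 2 + ‖q.2‖ ^ 2 ∧ q.1 ^ 2 + ‖q.2‖ ^ 2 < R ∧ c ≤ q.1 ∧ q.1 ≤ c + w}
  have hT : MeasurableSet T := by measurability
  have hpre : {v : E3 | R - t < ‖v‖ ^ 2 ∧ ‖v‖ ^ 2 < R ∧ c ≤ v 0 ∧ v 0 ≤ c + w} =
      euclideanSplitFirst 2 ⁻¹' T := by
    ext v
    have hv : ‖v‖ ^ 2 = _ := norm_sq_eq_euclideanSplitFirst (n := 2) v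
    rw [Set.mem_ofPred_eq, hv]
    rfl
  have hslice : ∀ z, volume (Prod.mk z ⁻¹' T) ≤
      (Set.Icc c (c + w)).indicator (fun _ => ENNReal.ofReal t * ENNReal.ofReal π) z := by
    intro z
    by_cases hz : z ∈ Set.Icc c (c + w)
    · rw [Set.indicator_of_mem hz]
      refine (measure_mono fun y hy => ?_).trans (volume_annulus_le (R - t - z ^ 2) ht)
      have hlow : R - t < z ^ 2 + ‖y‖ ^ 2 := hy.1
      have hup : z ^ 2 + ‖y‖ ^ 2 < R := hy.2.1
      exact ⟨by linarith, by linarith⟩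
    · rw [Set.indicator_of_notMem hz, nonpos_iff_eq_zero, measure_eq_zero_iff_ae_notMem]
      exact Filter.Eventually.of_forall fun y hy => hz ⟨hy.2.2.1, hy.2.2.2⟩
  rw [hpre]
  calc volume (euclideanSplitFirst 2 ⁻¹' T) = ∫⁻ z, volume (Prod.mk z ⁻¹' T) := by
        rw [(measurePreserving_euclideanSplitFirst 2).measure_preimage_equiv,
          Measure.volume_eq_prod, Measure.prod_apply hT]
    _ ≤ ∫⁻ z, (Set.Icc c (c + w)).indicator (fun _ => ENNReal.ofReal t * ENNReal.ofReal π) z :=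
        lintegral_mono hslice
    _ = ENNReal.ofReal t * ENNReal.ofReal π * ENNReal.ofReal w := by
        rw [lintegral_indicator_const measurableSet_Icc, Real.volume_Icc, add_sub_cancel_left]

theorem volume_shell_inter_slab_le {e : E3} (he : ‖e‖ = 1) {R t c w : ℝ} (ht : 0 ≤ t) :
    volume {r : E3 | R - t < ‖r‖ ^ 2 ∧ ‖r‖ ^ 2 < R ∧ c ≤ ⟪e, r⟫ ∧ ⟪e, r⟫ ≤ c + w} ≤
      ENNReal.ofReal t * ENNReal.ofReal π * ENNReal.ofReal w := by
  set e₀ : E3 := EuclideanSpace.single 0 1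
  set ρ := (ℝ ∙ (e - e₀))ᗮ.reflection
  have hρ : ρ e = e₀ := Submodule.reflection_sub (by simp [he, e₀])
  have hpre : {r : E3 | R - t < ‖r‖ ^ 2 ∧ ‖r‖ ^ 2 < R ∧ c ≤ ⟪e, r⟫ ∧ ⟪e, r⟫ ≤ c + w} =
      ρ ⁻¹' {v | R - t < ‖v‖ ^ 2 ∧ ‖v‖ ^ 2 < R ∧ c ≤ v 0 ∧ v 0 ≤ c + w} := by
    ext r
    have hinner : ⟪e, r⟫ = (ρ r) 0 := by
      rw [← ρ.inner_map_map, hρ, EuclideanSpace.inner_single_left]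
      simp
    simp only [Set.mem_ofPred_eq, Set.mem_preimage, LinearIsometryEquiv.norm_map, hinner]
  rw [hpre, ρ.measurePreserving.measure_preimage (by measurability)]
  exact volume_shell_inter_slab_le_of_fst ht

def lune (x : ℝ) (p : E3) : Set E3 := {r | ‖r‖ < x ∧ x < ‖r - p‖}

noncomputable def luneIntegral (x : ℝ) (p : E3) : ℝ≥0∞ :=
  ∫⁻ r in lune x p, ENNReal.ofReal ((‖r - p‖ ^ 2 - ‖r‖ ^ 2) ^ (-(3 / 2) : ℝ))

theorem measurableSet_lune (x : ℝ) (p : E3) : MeasurableSet (lune x p) := by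
  unfold lune; measurability

theorem sq_sub_sq_pos_of_mem_lune {x : ℝ} {p r : E3} (hr : r ∈ lune x p) :
    0 < ‖r - p‖ ^ 2 - ‖r‖ ^ 2 := by
  obtain ⟨h₁, h₂⟩ := hr
  nlinarith [norm_nonneg r]

theorem lune_subset_ball (x : ℝ) (p : E3) : lune x p ⊆ ball 0 x :=
  fun _ hr => mem_ball_zero_iff.2 hr.1

theorem volume_lune_inter_le {x u : ℝ} {p : E3} (hp : p ≠ 0) (hu : 0 < u) :
    volume (lune x p ∩ {r | ‖r - p‖ ^ 2 - ‖r‖ ^ 2 ≤ u}) ≤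
      ENNReal.ofReal (π / (2 * ‖p‖)) * ENNReal.ofReal (u ^ 2) := by
  have hp' : 0 < ‖p‖ := norm_pos_iff.2 hp
  set e : E3 := ‖p‖⁻¹ • p
  have he : ‖e‖ = 1 := by simp [e, norm_smul, hp'.ne']
  have hsub : lune x p ∩ {r | ‖r - p‖ ^ 2 - ‖r‖ ^ 2 ≤ u} ⊆
      {r | x ^ 2 - u < ‖r‖ ^ 2 ∧ ‖r‖ ^ 2 < x ^ 2 ∧ (‖p‖ ^ 2 - u) / (2 * ‖p‖) ≤ ⟪e, r⟫ ∧
        ⟪e, r⟫ ≤ (‖p‖ ^ 2 - u) / (2 * ‖p‖) + u / (2 * ‖p‖)} := by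
    rintro r ⟨hr, hru⟩
    have hru : ‖r - p‖ ^ 2 - ‖r‖ ^ 2 ≤ u := hru
    have hb := sq_sub_sq_pos_of_mem_lune hr
    obtain ⟨hr₁, hr₂⟩ := hr
    have hsq : ‖r - p‖ ^ 2 - ‖r‖ ^ 2 = ‖p‖ ^ 2 - 2 * ‖p‖ * ⟪e, r⟫ := by
      rw [norm_sub_sq_real, real_inner_smul_left, real_inner_comm]
      field_simp
      ring
    have h₁ : ‖r‖ ^ 2 < x ^ 2 := by nlinarith [norm_nonneg r]
    have h₂ : x ^ 2 < ‖r - p‖ ^ 2 := by nlinarith [norm_nonneg r]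
    refine ⟨by linarith, h₁, ?_, ?_⟩
    · rw [div_le_iff₀ (by positivity)]
      nlinarith
    · rw [← add_div, le_div_iff₀ (by positivity)]
      nlinarith
  refine (measure_mono hsub).trans ((volume_shell_inter_slab_le he hu.le).trans_eq ?_)
  rw [← ENNReal.ofReal_mul hu.le, ← ENNReal.ofReal_mul (by positivity),
    ← ENNReal.ofReal_mul (by positivity)]
  congr 1
  field_simp

theorem volume_lune_le {x : ℝ} (hx : x ≤ 1) (p : E3) :
    volume (lune x p) ≤ ENNReal.ofReal (4 * π / 3) :=
  (measure_mono ((lune_subset_ball x p).trans (ball_subset_ball hx))).trans_eq (by simp; ring_nf)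

theorem luneIntegral_le {x : ℝ} (hx : x ≤ 1) {p : E3} (hp : p ≠ 0) :
    luneIntegral x p ≤ ENNReal.ofReal (π * (4 / 3 + 8 / ‖p‖)) := by
  calc luneIntegral x p ≤ volume (lune x p) + 16 * ENNReal.ofReal (π / (2 * ‖p‖)) :=
        setLIntegral_rpow_neg_three_halves_le volume (fun _ hr => sq_sub_sq_pos_of_mem_lune hr)
          fun _ hu => volume_lune_inter_le hp hu
    _ ≤ ENNReal.ofReal (4 * π / 3) + ENNReal.ofReal (16 * (π / (2 * ‖p‖))) := by
        rw [ENNReal.ofReal_mul (by norm_num), ENNReal.ofReal_ofNat]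
        gcongr
        exact volume_lune_le hx p
    _ = ENNReal.ofReal (π * (4 / 3 + 8 / ‖p‖)) := by
        rw [← ENNReal.ofReal_add (by positivity) (by positivity)]
        congr 1
        field_simp
        ring

theorem luneIntegral_le_of_four_le_norm {x : ℝ} (hx : x ≤ 1) {p : E3} (hp : 4 ≤ ‖p‖) :
    luneIntegral x p ≤ ENNReal.ofReal (32 * π / 3 / ‖p‖ ^ 3) := by
  have hb : ∀ r ∈ lune x p, (‖p‖ / 2) ^ 2 ≤ ‖r - p‖ ^ 2 - ‖r‖ ^ 2 := by
    rintro r ⟨hr, -⟩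
    have := norm_sub_norm_le p r
    rw [norm_sub_rev] at this
    nlinarith [norm_nonneg r]
  calc luneIntegral x p ≤ ∫⁻ _ in lune x p, ENNReal.ofReal (8 / ‖p‖ ^ 3) :=
        setLIntegral_mono measurable_const fun r hr => ENNReal.ofReal_le_ofReal <|
          calc (‖r - p‖ ^ 2 - ‖r‖ ^ 2) ^ (-(3 / 2) : ℝ) ≤ ((‖p‖ / 2) ^ 2) ^ (-(3 / 2) : ℝ) :=
                Real.rpow_le_rpow_of_nonpos (by positivity) (hb r hr) (by norm_num)
            _ = 8 / ‖p‖ ^ 3 := by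
                rw [sq_rpow_neg_three_halves (by positivity)]
                field_simp
                norm_num
    _ = ENNReal.ofReal (8 / ‖p‖ ^ 3) * volume (lune x p) := setLIntegral_const _ _
    _ ≤ ENNReal.ofReal (8 / ‖p‖ ^ 3) * ENNReal.ofReal (4 * π / 3) := by
        gcongr
        exact volume_lune_le hx p
    _ = ENNReal.ofReal (32 * π / 3 / ‖p‖ ^ 3) := by
        rw [← ENNReal.ofReal_mul (by positivity)]
        congr 1
        ring

theorem belyakovI_inner_le (x : ℝ) (p : E3) :
    ∫⁻ r in {r : E3 | ‖r‖ < 1 ∧ 1 < ‖r + p‖},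
      ∫⁻ r' in {r' : E3 | ‖r'‖ < x ∧ x < ‖r' - p‖},
        ENNReal.ofReal (1 / (‖r + p‖ ^ 2 - ‖r‖ ^ 2 + ‖r' - p‖ ^ 2 - ‖r'‖ ^ 2) ^ 3) ≤
      ENNReal.ofReal 8⁻¹ * (luneIntegral 1 (-p) * luneIntegral x p) := by
  have hlune : {r : E3 | ‖r‖ < 1 ∧ 1 < ‖r + p‖} = lune 1 (-p) := by
    simp only [lune, sub_neg_eq_add]
  simp_rw [hlune, add_sub_assoc]
  refine (lintegral_lintegral_one_div_add_pow_three_le (by fun_prop)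
    (ae_restrict_of_forall_mem (measurableSet_lune 1 (-p)) fun r hr => ?_)
    (ae_restrict_of_forall_mem (measurableSet_lune x p) fun r hr =>
      sq_sub_sq_pos_of_mem_lune hr)).trans_eq ?_
  · simpa using sq_sub_sq_pos_of_mem_lune hr
  · simp only [luneIntegral, sub_neg_eq_add]

theorem luneIntegral_mul_le_of_norm_lt_four {x : ℝ} (hx : x ≤ 1) {p : E3} (hp : p ≠ 0)
    (hp₄ : ‖p‖ < 4) :
    luneIntegral 1 (-p) * luneIntegral x p ≤ ENNReal.ofReal ((14 * π) ^ 2 * (‖p‖ ^ 2)⁻¹) := by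
  have hp' : 0 < ‖p‖ := norm_pos_iff.2 hp
  have hbound : π * (4 / 3 + 8 / ‖p‖) ≤ 14 * π / ‖p‖ := by
    rw [le_div_iff₀ hp', mul_assoc, add_mul, div_mul_cancel₀ _ hp'.ne']
    nlinarith [pi_pos]
  calc luneIntegral 1 (-p) * luneIntegral x p
      ≤ ENNReal.ofReal (π * (4 / 3 + 8 / ‖p‖)) * ENNReal.ofReal (π * (4 / 3 + 8 / ‖p‖)) := by
        have h := luneIntegral_le le_rfl (neg_ne_zero.2 hp)
        rw [norm_neg] at h
        exact mul_le_mul' h (luneIntegral_le hx hp)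
    _ ≤ ENNReal.ofReal (14 * π / ‖p‖) * ENNReal.ofReal (14 * π / ‖p‖) := by gcongr
    _ = ENNReal.ofReal ((14 * π) ^ 2 * (‖p‖ ^ 2)⁻¹) := by
        rw [← ENNReal.ofReal_mul (by positivity)]
        congr 1
        field_simp

theorem luneIntegral_mul_le_of_four_le_norm {x : ℝ} (hx : x ≤ 1) {p : E3} (hp₄ : 4 ≤ ‖p‖) :
    luneIntegral 1 (-p) * luneIntegral x p ≤
      ENNReal.ofReal (64 * (32 * π / 3) ^ 2 * ((1 + ‖p‖) ^ 6)⁻¹) := by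
  have hp' : 0 < ‖p‖ := by linarith
  have hdecay : (‖p‖ ^ 6)⁻¹ ≤ 64 * ((1 + ‖p‖) ^ 6)⁻¹ := by
    rw [← div_eq_mul_inv, inv_le_comm₀ (by positivity) (by positivity), inv_div,
      div_le_iff₀ (by norm_num)]
    calc (1 + ‖p‖) ^ 6 ≤ (2 * ‖p‖) ^ 6 := by gcongr; linarith
      _ = ‖p‖ ^ 6 * 64 := by ring
  calc luneIntegral 1 (-p) * luneIntegral x p
      ≤ ENNReal.ofReal (32 * π / 3 / ‖p‖ ^ 3) * ENNReal.ofReal (32 * π / 3 / ‖p‖ ^ 3) := by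
        have h := luneIntegral_le_of_four_le_norm le_rfl (p := -p) (by rwa [norm_neg])
        rw [norm_neg] at h
        exact mul_le_mul' h (luneIntegral_le_of_four_le_norm hx hp₄)
    _ = ENNReal.ofReal ((32 * π / 3) ^ 2 * (‖p‖ ^ 6)⁻¹) := by
        rw [← ENNReal.ofReal_mul (by positivity)]
        congr 1
        field_simp
    _ ≤ ENNReal.ofReal (64 * (32 * π / 3) ^ 2 * ((1 + ‖p‖) ^ 6)⁻¹) := by
        rw [mul_comm 64, mul_assoc]
        gcongr

theorem lintegral_luneIntegral_mul_le :
    ∃ C < ∞, ∀ x ≤ 1, ∫⁻ p : E3, luneIntegral 1 (-p) * luneIntegral x p ≤ C := by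
  set A := ∫⁻ p in ball (0 : E3) 4, ENNReal.ofReal ((‖p‖ ^ 2)⁻¹)
  set B := ∫⁻ p : E3, ENNReal.ofReal (((1 + ‖p‖) ^ 6)⁻¹)
  have hA : A < ∞ := setLIntegral_ball_inv_norm_sq_lt_top (by simp) 4
  have hB : B < ∞ := lintegral_inv_one_add_norm_pow_lt_top (by simp)
  refine ⟨ENNReal.ofReal ((14 * π) ^ 2) * A + ENNReal.ofReal (64 * (32 * π / 3) ^ 2) * B,
    by finiteness, fun x hx => ?_⟩
  rw [← lintegral_add_compl _ measurableSet_ball]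
  gcongr ?_ + ?_
  · rw [← lintegral_const_mul' _ _ ENNReal.ofReal_ne_top]
    refine lintegral_mono_ae ?_
    filter_upwards [ae_restrict_mem measurableSet_ball, ae_restrict_of_ae (Measure.ae_ne volume 0)]
      with p hp hp₀
    rw [← ENNReal.ofReal_mul (by positivity)]
    exact luneIntegral_mul_le_of_norm_lt_four hx hp₀ (mem_ball_zero_iff.1 hp)
  · rw [← lintegral_const_mul' _ _ ENNReal.ofReal_ne_top]
    refine (setLIntegral_mono (by fun_prop) fun p hp => ?_).trans (setLIntegral_le_lintegral _ _)
    rw [← ENNReal.ofReal_mul (by positivity)]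
    exact luneIntegral_mul_le_of_four_le_norm hx (by simpa using hp)

theorem belyakovI_three_le : ∃ C < ∞, ∀ x ≤ 1, belyakovI 3 x ≤ C := by
  obtain ⟨C, hC, hbound⟩ := lintegral_luneIntegral_mul_le
  refine ⟨ENNReal.ofReal 8⁻¹ * C, by finiteness, fun x hx => ?_⟩
  calc belyakovI 3 x
      ≤ ∫⁻ p : E3, ENNReal.ofReal 8⁻¹ * (luneIntegral 1 (-p) * luneIntegral x p) :=
        lintegral_mono fun p => belyakovI_inner_le x p
    _ ≤ ENNReal.ofReal 8⁻¹ * C := by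
        rw [lintegral_const_mul' _ _ ENNReal.ofReal_ne_top]
        gcongr
        exact hbound x hx

/-- `I₃(x) ≤ C x⁻³` uniformly in `x ∈ (0,1]`. -/
theorem belyakovI_three_bound :
    ∃ C : ℝ, 0 < C ∧ ∀ x : ℝ, 0 < x → x ≤ 1 →
      belyakovI 3 x ≤ ENNReal.ofReal (C / x ^ 3) := by
  obtain ⟨C, hC, hI⟩ := belyakovI_three_le
  refine ⟨C.toReal + 1, by positivity, fun x hx hx₁ => (hI x hx₁).trans ?_⟩
  rw [ENNReal.le_ofReal_iff_toReal_le hC.ne (by positivity)]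
  calc C.toReal ≤ C.toReal + 1 := le_add_of_nonneg_right zero_le_one
    _ ≤ (C.toReal + 1) / x ^ 3 :=
        le_div_self (by positivity) (by positivity) (pow_le_one₀ hx.le hx₁)
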